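/- Let h > 0 and f : ℝ≥0 → ℝ continuous with f(0) = 0. Let σ₁ = sup{s ∈ [0,τ₁] : f(s) = inf_{[0,s]} f}, θ₁ = inf{s > 0 : f(s) − h = inf_{[0,s]} f}, τ₁ = inf{s > θ₁ : sup_{[θ₁,s]} f = f(s) + h}, and suppose τ₁ < ∞. Then for t ∈ [0,τ₁], the two-sided reflection is given explicitly: Λ_{0,h}(f)(t) = f(t) − inf_{[0,t]} f for t ∈ [0,σ₁]; Λ_{0,h}(f)(t) = f(t) − f(σ₁) for t ∈ [σ₁,θ₁]; and Λ_{0,h}(f)(t) = f(t) + h − sup_{[θ₁,t]} f for t ∈ [θ₁,τ₁]. In particular Λ_{0,h}(f)(σ₁) = 0, Λ_{0,h}(f)(θ₁) = h, and Λ_{0,h}(f)(τ₁) = 0. -/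

import Mathlib

open Set
open scoped NNReal ENNReal

/-- Solution data for the two-sided Skorohod reflection problem of `f` on `[0,h]`:
`c0` and `ch` are the compensators at `0` and at `h`,
and `fun t => f t + ch t + c0 t` is the reflected path `Λ_{0,h}(f)`.
The support conditions on the measures `dc⁰` and `d(−cʰ)` are phrased as:
the compensator is constant on every (closed) interval on which the reflected
path avoids the corresponding boundary. -/
structure SkorohodPair (h : ℝ) (f c0 ch : ℝ≥0 → ℝ) : Prop where
  cont0 : Continuous c0
  conth : Continuous ch
  init0 : c0 0 = 0
  inith : ch 0 = 0
  mem_Icc : ∀ t, f t + ch t + c0 t ∈ Set.Icc (0 : ℝ) h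
  mono0 : Monotone c0
  antih : Antitone ch
  flat0 : ∀ a b : ℝ≥0, a ≤ b → (∀ t ∈ Set.Icc a b, f t + ch t + c0 t ≠ 0) → c0 b = c0 a
  flath : ∀ a b : ℝ≥0, a ≤ b → (∀ t ∈ Set.Icc a b, f t + ch t + c0 t ≠ h) → ch b = ch a

/-- `eInf S` : infimum of a set of times, in `ℝ≥0∞`, with the convention `inf ∅ = ∞`. -/
noncomputable def eInf (S : Set ℝ≥0) : ℝ≥0∞ := sInf ((fun x : ℝ≥0 => (x : ℝ≥0∞)) '' S)

/-- `eSup S` : supremum of a set of times, in `ℝ≥0∞`. -/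
noncomputable def eSup (S : Set ℝ≥0) : ℝ≥0∞ := sSup ((fun x : ℝ≥0 => (x : ℝ≥0∞)) '' S)

/-- `inf_{[a,s]} f`, where the left endpoint `a` may be infinite. -/
noncomputable def infBetween (f : ℝ≥0 → ℝ) (a : ℝ≥0∞) (s : ℝ≥0) : ℝ :=
  sInf (f '' {u : ℝ≥0 | a ≤ (u : ℝ≥0∞) ∧ u ≤ s})

/-- `sup_{[a,s]} f`, where the left endpoint `a` may be infinite. -/
noncomputable def supBetween (f : ℝ≥0 → ℝ) (a : ℝ≥0∞) (s : ℝ≥0) : ℝ :=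
  sSup (f '' {u : ℝ≥0 | a ≤ (u : ℝ≥0∞) ∧ u ≤ s})

/-- `θ_{n+1} = inf {s > τ_n : f s − h = inf_{[τ_n,s]} f}`. -/
noncomputable def thetaNext (h : ℝ) (f : ℝ≥0 → ℝ) (τ : ℝ≥0∞) : ℝ≥0∞ :=
  eInf {s : ℝ≥0 | τ < (s : ℝ≥0∞) ∧ f s - h = infBetween f τ s}

/-- `τ_{n+1} = inf {s > θ_{n+1} : sup_{[θ_{n+1},s]} f = f s + h}`. -/
noncomputable def tauNext (h : ℝ) (f : ℝ≥0 → ℝ) (τ : ℝ≥0∞) : ℝ≥0∞ :=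
  eInf {s : ℝ≥0 | thetaNext h f τ < (s : ℝ≥0∞) ∧
    supBetween f (thetaNext h f τ) s = f s + h}

/-- The sequence `(τ_n)` of completion times of the sub-excursions of height `h`. -/
noncomputable def tauSeq (h : ℝ) (f : ℝ≥0 → ℝ) : ℕ → ℝ≥0∞
  | 0 => 0
  | n + 1 => tauNext h f (tauSeq h f n)

/-- `σ_{n+1} = sup {s ∈ [τ_n, τ_{n+1}] : f s = inf_{[τ_n,s]} f}` (and `σ₀ = 0`). -/
noncomputable def sigmaSeq (h : ℝ) (f : ℝ≥0 → ℝ) : ℕ → ℝ≥0∞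
  | 0 => 0
  | n + 1 => eSup {s : ℝ≥0 | tauSeq h f n ≤ (s : ℝ≥0∞) ∧ (s : ℝ≥0∞) ≤ tauSeq h f (n + 1) ∧
      f s = infBetween f (tauSeq h f n) s}

/-- The returning times of a path `Λ` to level `0` after visiting level `h`:
`t₀ = 0`, `T_{n+1} = inf {u > t_n : Λ u = h}`, `t_{n+1} = inf {u > T_{n+1} : Λ u = 0}`. -/
noncomputable def retSeq (h : ℝ) (Λ : ℝ≥0 → ℝ) : ℕ → ℝ≥0∞
  | 0 => 0
  | n + 1 =>
      eInf {u : ℝ≥0 |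
        eInf {v : ℝ≥0 | retSeq h Λ n < (v : ℝ≥0∞) ∧ Λ v = h} < (u : ℝ≥0∞) ∧ Λ u = 0}

/-- The exit times of `Λ` at level `0`: `s_{n+1} = sup {u ∈ [t_n, t_{n+1}) : Λ u = 0}`. -/
noncomputable def exitSeq (h : ℝ) (Λ : ℝ≥0 → ℝ) : ℕ → ℝ≥0∞
  | 0 => 0
  | n + 1 => eSup {u : ℝ≥0 | retSeq h Λ n ≤ (u : ℝ≥0∞) ∧ (u : ℝ≥0∞) < retSeq h Λ (n + 1) ∧
      Λ u = 0}

/-!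
Up to `θ₁` only the barrier at `0` acts, so `Λ` is the one-sided reflection `f - inf_{[0,·]} f`,
and `θ₁` is the first time this reaches `h`. From `θ₁` to `τ₁` only the barrier at `h` acts, so
`Λ = f + h - sup_{[θ₁,·]} f`, and `τ₁` is the first time this returns to `0`. These explicit
compensators solve the Skorohod problem on `[0, τ₁]`, where solutions are unique by a comparison
argument. Finally `σ₁` is the last time before `τ₁` at which `f` touches its running infimum, so the
running infimum is constant on `[σ₁, τ₁]`.
-/

section RunningExtrema

variable {α β : Type*} [ConditionallyCompleteLinearOrder α] [ConditionallyCompleteLinearOrder β]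

noncomputable def runningSup (f : α → β) (a t : α) : β := sSup (f '' Icc a t)

noncomputable def runningInf (f : α → β) (a t : α) : β := sInf (f '' Icc a t)

variable {f : α → β} {a b c s t u : α}

theorem runningSup_self (f : α → β) (a : α) : runningSup f a a = f a := by
  rw [runningSup, Icc_self, image_singleton, csSup_singleton]

theorem runningInf_self (f : α → β) (a : α) : runningInf f a a = f a :=
  runningSup_self (β := βᵒᵈ) f a

variable [TopologicalSpace α] [OrderTopology α] [TopologicalSpace β] [OrderTopology β]

theorem le_runningSup (hf : Continuous f) (hu : u ∈ Icc a t) : f u ≤ runningSup f a t :=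
  le_csSup (isCompact_Icc.image hf).bddAbove (mem_image_of_mem f hu)

theorem runningInf_le (hf : Continuous f) (hu : u ∈ Icc a t) : runningInf f a t ≤ f u :=
  le_runningSup (β := βᵒᵈ) hf hu

theorem runningSup_mem_image (hf : Continuous f) (hat : a ≤ t) :
    runningSup f a t ∈ f '' Icc a t :=
  (isCompact_Icc.image hf).sSup_mem ((nonempty_Icc.2 hat).image f)

theorem runningSup_mono (hf : Continuous f) (has : a ≤ s) (hst : s ≤ t) :
    runningSup f a s ≤ runningSup f a t :=
  csSup_le_csSup (isCompact_Icc.image hf).bddAbove ((nonempty_Icc.2 has).image f)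
    (image_mono (Icc_subset_Icc_right hst))

theorem runningInf_anti (hf : Continuous f) (has : a ≤ s) (hst : s ≤ t) :
    runningInf f a t ≤ runningInf f a s :=
  runningSup_mono (β := βᵒᵈ) hf has hst

theorem runningSup_eq_max (hf : Continuous f) (hab : a ≤ b) (hbc : b ≤ c) :
    runningSup f a c = max (runningSup f a b) (runningSup f b c) := by
  rw [runningSup, ← Icc_union_Icc_eq_Icc hab hbc, image_union,
    csSup_union (isCompact_Icc.image hf).bddAbove ((nonempty_Icc.2 hab).image f)
      (isCompact_Icc.image hf).bddAbove ((nonempty_Icc.2 hbc).image f)]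
  rfl

theorem runningSup_eq_of_forall_ne (hf : Continuous f) (hca : c ≤ a) (hab : a ≤ b)
    (hne : ∀ u ∈ Ioc a b, f u ≠ runningSup f c u) : runningSup f c b = runningSup f c a := by
  obtain ⟨u, hu, hfu⟩ := runningSup_mem_image hf hab
  rw [runningSup_eq_max hf hca hab, ← hfu]
  refine max_eq_left (not_lt.1 fun hlt => hne u ⟨hu.1.lt_of_ne ?_, hu.2⟩ ?_)
  · rintro rfl
    exact hlt.not_ge (le_runningSup hf ⟨hca, le_rfl⟩)
  · refine le_antisymm (le_runningSup hf ⟨hca.trans hu.1, le_rfl⟩) ?_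
    calc runningSup f c u ≤ runningSup f c b := runningSup_mono hf (hca.trans hu.1) hu.2
      _ = f u := by rw [runningSup_eq_max hf hca hab, ← hfu, max_eq_right hlt.le]

theorem runningInf_eq_of_forall_ne (hf : Continuous f) (hca : c ≤ a) (hab : a ≤ b)
    (hne : ∀ u ∈ Ioc a b, f u ≠ runningInf f c u) : runningInf f c b = runningInf f c a :=
  runningSup_eq_of_forall_ne (β := βᵒᵈ) hf hca hab hne

/-- On every compact window `[a, T]` the running supremum is a supremum over a fixed compact set
of a jointly continuous function, `(t, s) ↦ f (min s (max a t))`. -/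
theorem continuous_runningSup_max [NoMaxOrder α] (hf : Continuous f) :
    Continuous fun t => runningSup f a (max a t) := by
  have hwindow : ∀ {m T : α}, a ≤ m → m ≤ T → (fun s => min s m) '' Icc a T = Icc a m := by
    intro m T ham hmT
    ext u
    constructor
    · rintro ⟨s, hs, rfl⟩
      exact ⟨le_min hs.1 ham, min_le_right _ _⟩
    · exact fun hu => ⟨u, ⟨hu.1, hu.2.trans hmT⟩, min_eq_left hu.2⟩
  refine continuous_iff_continuousAt.2 fun t₀ => ?_
  obtain ⟨T, hT⟩ := exists_gt (max a t₀)
  have hcont : Continuous fun t => sSup ((fun s => f (min s (max a t))) '' Icc a T) :=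
    isCompact_Icc.continuous_sSup
      (hf.comp (continuous_snd.min (continuous_const.max continuous_fst)))
  refine hcont.continuousAt.congr (Filter.eventually_of_mem
    (Iio_mem_nhds ((le_max_right a t₀).trans_lt hT)) fun t ht => ?_)
  change sSup ((f ∘ fun s => min s (max a t)) '' Icc a T) = runningSup f a (max a t)
  rw [image_comp,
    hwindow (le_max_left a t) (max_le ((le_max_left a t₀).trans hT.le) (le_of_lt ht))]
  rfl

theorem continuous_runningInf_max [NoMaxOrder α] (hf : Continuous f) :
    Continuous fun t => runningInf f a (max a t) :=
  continuous_runningSup_max (β := βᵒᵈ) hf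

theorem continuousOn_runningSup [NoMaxOrder α] (hf : Continuous f) :
    ContinuousOn (runningSup f a) (Ici a) :=
  (continuous_runningSup_max (a := a) hf).continuousOn.congr fun _ ht => by
    simp only [max_eq_right (mem_Ici.1 ht)]

end RunningExtrema

theorem continuous_runningInf_zero {f : ℝ≥0 → ℝ} (hf : Continuous f) :
    Continuous (runningInf f 0) :=
  (continuous_runningInf_max (a := 0) hf).congr fun t => by rw [max_eq_right zero_le]

theorem ContinuousOn.isClosed_hitting {α δ : Type*} [LinearOrder α] [TopologicalSpace α]
    [ClosedIciTopology α] [TopologicalSpace δ] [T1Space δ] {g : α → δ} {a : α} {c : δ}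
    (hg : ContinuousOn g (Ici a)) (hga : g a ≠ c) : IsClosed {s | a < s ∧ g s = c} := by
  have hset : {s | a < s ∧ g s = c} = Ici a ∩ g ⁻¹' {c} := by
    ext s
    exact ⟨fun hs => ⟨hs.1.le, hs.2⟩,
      fun hs => ⟨lt_of_le_of_ne hs.1 (by rintro rfl; exact hga hs.2), hs.2⟩⟩
  rw [hset]
  exact hg.preimage_isClosed_of_isClosed isClosed_Ici isClosed_singleton

theorem ContinuousOn.le_of_isLeast_hitting {α δ : Type*} [ConditionallyCompleteLinearOrder α]
    [TopologicalSpace α] [OrderTopology α] [DenselyOrdered α] [LinearOrder δ] [TopologicalSpace δ]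
    [OrderClosedTopology δ] {g : α → δ} {a x t : α} {c : δ} (hg : ContinuousOn g (Ici a))
    (hga : g a < c) (hx : IsLeast {s | a < s ∧ g s = c} x) (ht : t ∈ Icc a x) : g t ≤ c := by
  by_contra! hct
  obtain ⟨s, hs, hgs⟩ :=
    intermediate_value_Icc ht.1 (hg.mono Icc_subset_Ici_self) ⟨hga.le, hct.le⟩
  have has : a < s := lt_of_le_of_ne hs.1 (by rintro rfl; exact hga.ne hgs)
  have hst : s = t := le_antisymm hs.2 (ht.2.trans (hx.2 ⟨has, hgs⟩))
  exact hct.ne' (hst ▸ hgs)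

theorem ContinuousOn.eq_of_forall_Ioc_eq {α γ : Type*} [LinearOrder α] [TopologicalSpace α]
    [OrderTopology α] [DenselyOrdered α] [TopologicalSpace γ] [T1Space γ] {g : α → γ} {s t : α}
    (hg : ContinuousOn g (Icc s t)) (hst : s < t) (hconst : ∀ a ∈ Ioc s t, g a = g t) :
    g s = g t := by
  have hs : s ∈ closure (Ioc s t) := by
    rw [closure_Ioc hst.ne]
    exact left_mem_Icc.2 hst.le
  exact closure_minimal (show g '' Ioc s t ⊆ {g t} from image_subset_iff.2 hconst)
    isClosed_singleton
    (((hg s (left_mem_Icc.2 hst.le)).mono Ioc_subset_Icc_self).mem_closure_image hs)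

theorem isLeast_of_coe_eq_eInf {S : Set ℝ≥0} {x : ℝ≥0} (hS : IsClosed S)
    (hx : (x : ℝ≥0∞) = eInf S) : IsLeast S x := by
  have hne : S.Nonempty := nonempty_iff_ne_empty.2 fun hempty => by
    simp [eInf, hempty] at hx
  rw [eInf, sInf_image, ← ENNReal.coe_sInf hne] at hx
  exact ENNReal.coe_injective hx ▸ hS.isLeast_csInf hne (OrderBot.bddBelow S)

theorem isGreatest_of_coe_eq_eSup {S : Set ℝ≥0} {x : ℝ≥0} (hS : IsCompact S) (hne : S.Nonempty)
    (hx : (x : ℝ≥0∞) = eSup S) : IsGreatest S x := by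
  rw [eSup, sSup_image, ← ENNReal.coe_sSup hS.bddAbove] at hx
  exact ENNReal.coe_injective hx ▸ hS.isGreatest_sSup hne

structure SkorohodPairOn (h : ℝ) (f c0 ch : ℝ≥0 → ℝ) (T : ℝ≥0) : Prop where
  cont0 : ContinuousOn c0 (Iic T)
  conth : ContinuousOn ch (Iic T)
  init0 : c0 0 = 0
  inith : ch 0 = 0
  mem_Icc : ∀ t ≤ T, f t + ch t + c0 t ∈ Icc (0 : ℝ) h
  mono0 : MonotoneOn c0 (Iic T)
  antih : AntitoneOn ch (Iic T)
  flat0 : ∀ a b : ℝ≥0, a ≤ b → b ≤ T → (∀ t ∈ Icc a b, f t + ch t + c0 t ≠ 0) → c0 b = c0 a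
  flath : ∀ a b : ℝ≥0, a ≤ b → b ≤ T → (∀ t ∈ Icc a b, f t + ch t + c0 t ≠ h) → ch b = ch a

theorem SkorohodPair.skorohodPairOn {h : ℝ} {f c0 ch : ℝ≥0 → ℝ} (hp : SkorohodPair h f c0 ch)
    (T : ℝ≥0) : SkorohodPairOn h f c0 ch T where
  cont0 := hp.cont0.continuousOn
  conth := hp.conth.continuousOn
  init0 := hp.init0
  inith := hp.inith
  mem_Icc t _ := hp.mem_Icc t
  mono0 := hp.mono0.monotoneOn _
  antih := hp.antih.antitoneOn _
  flat0 a b hab _ := hp.flat0 a b hab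
  flath a b hab _ := hp.flath a b hab

namespace SkorohodPairOn

variable {h : ℝ} {f c0 ch c0' ch' : ℝ≥0 → ℝ} {T t : ℝ≥0}

/-- Let `s` be the last time before `t` at which the first path was not above the second. On
`(s, t]` the first path is away from `0` and the second away from `h`, so the two compensators
that could push the first path above the second are flat there. -/
theorem path_le (hp : SkorohodPairOn h f c0 ch T) (hq : SkorohodPairOn h f c0' ch' T)
    (ht : t ≤ T) : f t + ch t + c0 t ≤ f t + ch' t + c0' t := by
  by_contra! hlt
  set D : ℝ≥0 → ℝ := fun u => (ch u + c0 u) - (ch' u + c0' u) with hD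
  have hDcont : ContinuousOn D (Iic t) :=
    ((hp.conth.add hp.cont0).sub (hq.conth.add hq.cont0)).mono (Iic_subset_Iic.2 ht)
  have hclosed : IsClosed (Iic t ∩ D ⁻¹' Iic 0) :=
    hDcont.preimage_isClosed_of_isClosed isClosed_Iic isClosed_Iic
  obtain ⟨s, ⟨hsle, hDs⟩, hlast⟩ := (isCompact_Icc.of_isClosed_subset hclosed
    fun _ hu => ⟨zero_le, hu.1⟩).exists_isGreatest
    ⟨0, mem_Iic.2 zero_le, by simp [hD, hp.init0, hp.inith, hq.init0, hq.inith]⟩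
  have hsT : s ≤ T := hsle.trans ht
  have hst : s < t := lt_of_le_of_ne hsle fun hs => by
    subst hs
    simp only [hD, mem_preimage, mem_Iic] at hDs
    linarith
  have hpos : ∀ u ∈ Ioc s t, f u + ch' u + c0' u < f u + ch u + c0 u := fun u hu => by
    by_contra! hle
    exact hu.1.not_ge (hlast ⟨hu.2, by simp only [hD, mem_preimage, mem_Iic]; linarith⟩)
  have hflat0 : ∀ a ∈ Ioc s t, c0 a = c0 t := fun a ha => (hp.flat0 a t ha.2 ht fun u hu =>
    ((hq.mem_Icc u (hu.2.trans ht)).1.trans_lt (hpos u ⟨ha.1.trans_le hu.1, hu.2⟩)).ne').symm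
  have hflath : ∀ a ∈ Ioc s t, ch' a = ch' t := fun a ha => (hq.flath a t ha.2 ht fun u hu =>
    ((hpos u ⟨ha.1.trans_le hu.1, hu.2⟩).trans_le (hp.mem_Icc u (hu.2.trans ht)).2).ne).symm
  have hIcc : Icc s t ⊆ Iic T := Icc_subset_Iic_self.trans (Iic_subset_Iic.2 ht)
  have he0 := (hp.cont0.mono hIcc).eq_of_forall_Ioc_eq hst hflat0
  have heh := (hq.conth.mono hIcc).eq_of_forall_Ioc_eq hst hflath
  have hmono := hq.mono0 (mem_Iic.2 hsT) (mem_Iic.2 ht) hst.le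
  have hanti := hp.antih (mem_Iic.2 hsT) (mem_Iic.2 ht) hst.le
  simp only [hD, mem_preimage, mem_Iic] at hDs
  linarith

theorem path_eq (hp : SkorohodPairOn h f c0 ch T) (hq : SkorohodPairOn h f c0' ch' T)
    (ht : t ≤ T) : f t + ch t + c0 t = f t + ch' t + c0' t :=
  le_antisymm (hp.path_le hq ht) (hq.path_le hp ht)

end SkorohodPairOn

section Explicit

variable {h : ℝ} {f : ℝ≥0 → ℝ} {θ τ u : ℝ≥0}

/-- The compensator at `0` of the one-sided reflection `f - inf_{[0,·]} f`, stopped at `θ`. -/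
noncomputable def explicitC0 (f : ℝ≥0 → ℝ) (θ u : ℝ≥0) : ℝ := -runningInf f 0 (min u θ)

/-- The compensator at `h` of the reflection `f + h - sup_{[θ,·]} f` started at `θ`. -/
noncomputable def explicitCh (f : ℝ≥0 → ℝ) (θ u : ℝ≥0) : ℝ := f θ - runningSup f θ (max θ u)

theorem explicit_path_of_le (hu : u ≤ θ) :
    f u + explicitCh f θ u + explicitC0 f θ u = f u - runningInf f 0 u := by
  simp only [explicitCh, explicitC0, max_eq_left hu, min_eq_left hu, runningSup_self]
  ring

theorem explicit_path_of_ge (hθ : f θ - runningInf f 0 θ = h) (hu : θ ≤ u) :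
    f u + explicitCh f θ u + explicitC0 f θ u = f u + h - runningSup f θ u := by
  simp only [explicitCh, explicitC0, max_eq_right hu, min_eq_right hu]
  linarith

theorem skorohodPairOn_explicit (hf : Continuous f) (hf0 : f 0 = 0)
    (hθ : f θ - runningInf f 0 θ = h) (hθle : ∀ t ≤ θ, f t - runningInf f 0 t ≤ h)
    (hτle : ∀ t ∈ Icc θ τ, runningSup f θ t - f t ≤ h) :
    SkorohodPairOn h f (explicitC0 f θ) (explicitCh f θ) τ where
  cont0 :=
    ((continuous_runningInf_zero hf).comp (continuous_id.min continuous_const)).neg.continuousOn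
  conth := (continuous_const.sub (continuous_runningSup_max hf)).continuousOn
  init0 := by simp [explicitC0, runningInf_self, hf0]
  inith := by simp [explicitCh, runningSup_self]
  mem_Icc t ht := by
    rcases le_total t θ with htθ | hθt
    · rw [explicit_path_of_le htθ]
      exact ⟨sub_nonneg.2 (runningInf_le hf ⟨zero_le, le_rfl⟩), hθle t htθ⟩
    · rw [explicit_path_of_ge hθ hθt]
      exact ⟨by linarith [hτle t ⟨hθt, ht⟩], by linarith [le_runningSup hf ⟨hθt, le_rfl⟩]⟩
  mono0 := fun u _ v _ huv =>
    neg_le_neg (runningInf_anti hf zero_le (min_le_min_right θ huv))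
  antih := fun u _ v _ huv =>
    sub_le_sub_left (runningSup_mono hf (le_max_left θ u) (max_le_max_left θ huv)) _
  flat0 a b hab _ hne := by
    rw [explicitC0, explicitC0, neg_inj]
    rcases le_total θ a with hθa | haθ
    · rw [min_eq_right hθa, min_eq_right (hθa.trans hab)]
    · rw [min_eq_left haθ]
      refine runningInf_eq_of_forall_ne hf zero_le (le_min hab haθ) fun u hu hfu => ?_
      have huθ : u ≤ θ := hu.2.trans (min_le_right b θ)
      exact hne u ⟨hu.1.le, hu.2.trans (min_le_left b θ)⟩
        (by rw [explicit_path_of_le huθ, hfu, sub_self])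
  flath a b hab _ hne := by
    rw [explicitCh, explicitCh, sub_right_inj]
    rcases le_total b θ with hbθ | hθb
    · rw [max_eq_left hbθ, max_eq_left (hab.trans hbθ)]
    · rw [max_eq_right hθb]
      refine runningSup_eq_of_forall_ne hf (le_max_left θ a) (max_le hθb hab) fun u hu hfu => ?_
      have hθu : θ ≤ u := (le_max_left θ a).trans hu.1.le
      exact hne u ⟨(le_max_right θ a).trans hu.1.le, hu.2⟩
        (by rw [explicit_path_of_ge hθ hθu, hfu]; ring)

end Explicit

section FirstExcursion

variable {h : ℝ} {f : ℝ≥0 → ℝ} {σ θ τ t : ℝ≥0}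

theorem infBetween_zero (f : ℝ≥0 → ℝ) (s : ℝ≥0) : infBetween f 0 s = runningInf f 0 s := by
  unfold infBetween runningInf
  congr 2
  ext u
  simp

theorem supBetween_coe (f : ℝ≥0 → ℝ) (a s : ℝ≥0) : supBetween f a s = runningSup f a s := by
  unfold supBetween runningSup
  congr 2
  ext u
  simp

theorem isLeast_thetaNext_zero (hh : 0 < h) (hf : Continuous f)
    (hθ : (θ : ℝ≥0∞) = thetaNext h f 0) :
    IsLeast {s | 0 < s ∧ f s - runningInf f 0 s = h} θ := by
  refine isLeast_of_coe_eq_eInf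
    ((hf.sub (continuous_runningInf_zero hf)).continuousOn.isClosed_hitting
      (by simp [runningInf_self, hh.ne])) ?_
  rw [hθ, thetaNext]
  congr 1
  ext s
  simp only [ENNReal.coe_pos, infBetween_zero]
  constructor <;> rintro ⟨hs, heq⟩ <;> exact ⟨hs, by linarith⟩

theorem isLeast_tauNext_zero (hh : 0 < h) (hf : Continuous f)
    (hθ : (θ : ℝ≥0∞) = thetaNext h f 0) (hτ : (τ : ℝ≥0∞) = tauNext h f 0) :
    IsLeast {s | θ < s ∧ runningSup f θ s - f s = h} τ := by
  refine isLeast_of_coe_eq_eInf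
    (((continuousOn_runningSup hf).sub hf.continuousOn).isClosed_hitting
      (by simp [runningSup_self, hh.ne])) ?_
  rw [hτ, tauNext, ← hθ]
  congr 1
  ext s
  simp only [ENNReal.coe_lt_coe, supBetween_coe]
  constructor <;> rintro ⟨hs, heq⟩ <;> exact ⟨hs, by linarith⟩

theorem isGreatest_sigmaSeq_one (hf : Continuous f) (hτ : (τ : ℝ≥0∞) = tauSeq h f 1)
    (hσ : (σ : ℝ≥0∞) = sigmaSeq h f 1) :
    IsGreatest {s | s ≤ τ ∧ f s = runningInf f 0 s} σ := by
  have hclosed : IsClosed {s | s ≤ τ ∧ f s = runningInf f 0 s} :=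
    isClosed_Iic.inter (isClosed_eq hf (continuous_runningInf_zero hf))
  refine isGreatest_of_coe_eq_eSup
    (isCompact_Icc.of_isClosed_subset hclosed fun _ hs => ⟨zero_le, hs.1⟩)
    ⟨0, zero_le, (runningInf_self f 0).symm⟩ ?_
  rw [hσ, sigmaSeq, ← hτ]
  congr 1
  ext s
  simp [infBetween_zero, tauSeq]

theorem sub_runningInf_le_of_isLeast (hh : 0 < h) (hf : Continuous f)
    (hθ : IsLeast {s | 0 < s ∧ f s - runningInf f 0 s = h} θ) (ht : t ≤ θ) :
    f t - runningInf f 0 t ≤ h :=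
  (hf.sub (continuous_runningInf_zero hf)).continuousOn.le_of_isLeast_hitting
    (by simpa [runningInf_self] using hh) hθ ⟨zero_le, ht⟩

theorem runningSup_sub_le_of_isLeast (hh : 0 < h) (hf : Continuous f)
    (hτ : IsLeast {s | θ < s ∧ runningSup f θ s - f s = h} τ) (ht : t ∈ Icc θ τ) :
    runningSup f θ t - f t ≤ h :=
  ((continuousOn_runningSup hf).sub hf.continuousOn).le_of_isLeast_hitting
    (by simpa [runningSup_self] using hh) hτ ht

end FirstExcursion

/-- **Explicit form of the two-sided reflection up to `τ₁`** (Step 1 of the proof of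
Proposition 4): with `σ₁, θ₁, τ₁` as in the text (here given as finite times `σ, θ, τ`),
`Λ_{0,h}(f) = f − inf_{[0,·]} f` on `[0,σ₁]`, `Λ_{0,h}(f) = f − f(σ₁)` on `[σ₁,θ₁]`,
`Λ_{0,h}(f) = f + h − sup_{[θ₁,·]} f` on `[θ₁,τ₁]`; in particular
`Λ(σ₁) = 0`, `Λ(θ₁) = h` and `Λ(τ₁) = 0`. -/
theorem two_sided_reflection_up_to_tau_one
    (h : ℝ) (hh : 0 < h) (f c0 ch : ℝ≥0 → ℝ) (hf : Continuous f) (hf0 : f 0 = 0)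
    (hp : SkorohodPair h f c0 ch)
    (Λ : ℝ≥0 → ℝ) (hΛ : ∀ t, Λ t = f t + ch t + c0 t)
    (σ θ τ : ℝ≥0)
    (hσ : (σ : ℝ≥0∞) = sigmaSeq h f 1)
    (hθ : (θ : ℝ≥0∞) = thetaNext h f 0)
    (hτ : (τ : ℝ≥0∞) = tauSeq h f 1) :
    (∀ t, t ≤ σ → Λ t = f t - sInf (f '' Set.Icc 0 t)) ∧
    (∀ t, σ ≤ t → t ≤ θ → Λ t = f t - f σ) ∧
    (∀ t, θ ≤ t → t ≤ τ → Λ t = f t + h - sSup (f '' Set.Icc θ t)) ∧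
    Λ σ = 0 ∧ Λ θ = h ∧ Λ τ = 0 := by
  have hθ' := isLeast_thetaNext_zero hh hf hθ
  have hτ' := isLeast_tauNext_zero hh hf hθ hτ
  have hσ' := isGreatest_sigmaSeq_one hf hτ hσ
  have hθτ : θ ≤ τ := hτ'.1.1.le
  have hτle := fun t => runningSup_sub_le_of_isLeast (t := t) hh hf hτ'
  have hexplicit : ∀ t ≤ τ, Λ t = f t + explicitCh f θ t + explicitC0 f θ t := fun t ht =>
    (hΛ t).trans ((hp.skorohodPairOn τ).path_eq (skorohodPairOn_explicit hf hf0 hθ'.1.2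
      (fun t => sub_runningInf_le_of_isLeast hh hf hθ') hτle) ht)
  have hlow : ∀ t ≤ θ, Λ t = f t - runningInf f 0 t := fun t ht =>
    (hexplicit t (ht.trans hθτ)).trans (explicit_path_of_le ht)
  have hup : ∀ t, θ ≤ t → t ≤ τ → Λ t = f t + h - runningSup f θ t := fun t h₁ h₂ =>
    (hexplicit t h₂).trans (explicit_path_of_ge hθ'.1.2 h₁)
  have hflat : ∀ t, σ ≤ t → t ≤ τ → runningInf f 0 t = f σ := fun t h₁ h₂ =>
    (runningInf_eq_of_forall_ne hf zero_le h₁ fun u hu hfu =>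
      hu.1.not_ge (hσ'.2 ⟨hu.2.trans h₂, hfu⟩)).trans hσ'.1.2.symm
  have hbefore : ∀ t ≤ σ, Λ t = f t - runningInf f 0 t := by
    intro t htσ
    rcases le_total t θ with htθ | hθt
    · exact hlow t htθ
    · -- `h ≤ sup_{[θ,t]} f - inf_{[0,t]} f ≤ sup_{[θ,σ]} f - f σ ≤ h`
      rw [hup t hθt (htσ.trans hσ'.1.1)]
      linarith [le_runningSup hf ⟨le_rfl, hθt⟩, runningSup_mono hf hθt htσ, hθ'.1.2, hσ'.1.2,
        runningInf_anti hf zero_le hθt, runningInf_anti hf zero_le htσ,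
        hτle σ ⟨hθt.trans htσ, hσ'.1.1⟩]
  refine ⟨hbefore, fun t h₁ h₂ => by rw [hlow t h₂, hflat t h₁ (h₂.trans hθτ)], hup, ?_, ?_, ?_⟩
  · rw [hbefore σ le_rfl, ← hσ'.1.2, sub_self]
  · rw [hlow θ le_rfl, hθ'.1.2]
  · rw [hup τ hθτ le_rfl, hτ'.1.2.symm]
    ring
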